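/- Let α ∈ (0,1] and p ≥ 0 real. For x > 0, T_α((J_α)_p(x)) = (α·p/x^α)·(J_α)_p(x) − α·(J_α)_{p+1}(x). -/

import Mathlib

/-!
Since `(J_α)_q = J_q ∘ (x ↦ x ^ α)` for the classical Bessel function `J_q`, the chain rule gives
`T_α (J_α)_p (x) = α J_p'(x ^ α)`, and the claim is the classical recurrence
`J_p'(z) = (p / z) J_p(z) - J_{p+1}(z)`. Writing `J_p(z) = (z/2)^p F_p((z/2)^2)` with the entire series
`F_p(w) = ∑ (-1)^n w^n / (n! Γ(p+n+1))`, the recurrence reduces to `F_p' = -F_{p+1}`, which after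
termwise differentiation is the coefficient identity `(n+1) c_{p,n+1} = -c_{p+1,n}`. The Gamma
function enters only through `Γ(p+1) ≤ Γ(p+n+1)`, which makes the series converge.
-/

open Real

noncomputable def confDeriv (α : ℝ) (f : ℝ → ℝ) (x : ℝ) : ℝ :=
  x ^ (1 - α) * deriv f x

noncomputable def confBesselJ (α q : ℝ) (x : ℝ) : ℝ :=
  ∑' n : ℕ, ((-1 : ℝ) ^ n / ((n.factorial : ℝ) * Real.Gamma (q + n + 1)))
    * (x ^ α / 2) ^ (2 * (n : ℝ) + q)

theorem hasDerivAt_tsum_mul_pow {𝕜 : Type*} [RCLike 𝕜] {a : ℕ → 𝕜}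
    (ha : ∀ r : ℝ, Summable fun n => ‖a n‖ * r ^ n) (w : 𝕜) :
    HasDerivAt (fun w => ∑' n, a n * w ^ n) (∑' n, (n + 1) * a (n + 1) * w ^ n) w := by
  set R := ‖w‖ + 1
  have hw : w ∈ Metric.ball (0 : 𝕜) R := by simp [R]
  have hbound : ∀ n, ∀ y ∈ Metric.ball (0 : 𝕜) R,
      ‖a n * (n * y ^ (n - 1))‖ ≤ ‖a n‖ * (2 * R) ^ n := by
    intro n y hy
    have hy : ‖y‖ ≤ R := (mem_ball_zero_iff.mp hy).le
    have hR : 1 ≤ R := by simp [R]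
    have hn : (n : ℝ) ≤ 2 ^ n := by exact_mod_cast Nat.lt_two_pow_self.le
    rw [norm_mul, norm_mul, norm_pow, RCLike.norm_natCast, mul_pow]
    gcongr ‖a n‖ * ?_
    calc (n : ℝ) * ‖y‖ ^ (n - 1) ≤ 2 ^ n * R ^ (n - 1) := by gcongr
      _ ≤ 2 ^ n * R ^ n := by gcongr; exact n.sub_le 1
  have hsum : Summable fun n => a n * w ^ n :=
    (ha ‖w‖).of_norm_bounded fun n => by rw [norm_mul, norm_pow]
  have hsum' : Summable fun n => a n * (n * w ^ (n - 1)) :=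
    (ha (2 * R)).of_norm_bounded fun n => hbound n w hw
  refine (hasDerivAt_tsum_of_isPreconnected (ha (2 * R)) Metric.isOpen_ball
    (convex_ball 0 R).isPreconnected (fun n y _ => (hasDerivAt_pow n y).const_mul (a n))
    hbound hw hsum hw).congr_deriv ?_
  rw [hsum'.tsum_eq_zero_add]
  simp only [Nat.cast_zero, zero_mul, mul_zero, zero_add, Nat.add_sub_cancel, Nat.cast_add,
    Nat.cast_one]
  exact tsum_congr fun n => by ring

lemma Gamma_add_one_le_Gamma_add_nat_add_one {p : ℝ} (hp : 0 ≤ p) (n : ℕ) :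
    Gamma (p + 1) ≤ Gamma (p + n + 1) := by
  have hmono : Monotone fun n : ℕ => Gamma (p + n + 1) := by
    refine monotone_nat_of_le_succ fun n => ?_
    have hpos : 0 < Gamma (p + n + 1) := Gamma_pos_of_pos (by positivity)
    calc Gamma (p + n + 1) ≤ (p + n + 1) * Gamma (p + n + 1) := by
          nlinarith [(Nat.cast_nonneg n : (0 : ℝ) ≤ n)]
      _ = Gamma (p + (n + 1 : ℕ) + 1) := by
          rw [← Gamma_add_one (by positivity)]; push_cast; ring_nf
  simpa using hmono (Nat.zero_le n)

noncomputable def besselCoeff (p : ℝ) (n : ℕ) : ℝ :=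
  (-1) ^ n / (n.factorial * Gamma (p + n + 1))

lemma succ_mul_besselCoeff_succ (p : ℝ) (n : ℕ) :
    (n + 1) * besselCoeff p (n + 1) = -besselCoeff (p + 1) n := by
  have hΓ : Gamma (p + (n + 1 : ℕ) + 1) = Gamma (p + 1 + n + 1) := by push_cast; ring_nf
  have hn : (n : ℝ) + 1 ≠ 0 := by positivity
  rw [besselCoeff, besselCoeff, hΓ, Nat.factorial_succ, pow_succ]
  push_cast
  field_simp

lemma norm_besselCoeff_le {p : ℝ} (hp : 0 ≤ p) (n : ℕ) :
    ‖besselCoeff p n‖ ≤ 1 / n.factorial / Gamma (p + 1) := by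
  have hΓ : 0 < Gamma (p + 1) := Gamma_pos_of_pos (by linarith)
  rw [besselCoeff, norm_div, norm_pow, norm_neg, norm_one, one_pow,
    Real.norm_of_nonneg (by positivity), div_div]
  gcongr
  exact Gamma_add_one_le_Gamma_add_nat_add_one hp n

lemma summable_norm_besselCoeff_mul_pow {p : ℝ} (hp : 0 ≤ p) (r : ℝ) :
    Summable fun n => ‖besselCoeff p n‖ * r ^ n := by
  refine ((summable_pow_div_factorial |r|).div_const (Gamma (p + 1))).of_norm_bounded fun n => ?_
  have hΓ : 0 < Gamma (p + 1) := Gamma_pos_of_pos (by linarith)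
  calc ‖‖besselCoeff p n‖ * r ^ n‖ = ‖besselCoeff p n‖ * |r| ^ n := by
        rw [norm_mul, norm_norm, norm_pow, Real.norm_eq_abs r]
    _ ≤ 1 / n.factorial / Gamma (p + 1) * |r| ^ n := by
        gcongr; exact norm_besselCoeff_le hp n
    _ = |r| ^ n / n.factorial / Gamma (p + 1) := by ring

noncomputable def besselSeries (p w : ℝ) : ℝ :=
  ∑' n, besselCoeff p n * w ^ n

lemma hasDerivAt_besselSeries {p : ℝ} (hp : 0 ≤ p) (w : ℝ) :
    HasDerivAt (besselSeries p) (-besselSeries (p + 1) w) w := by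
  refine (hasDerivAt_tsum_mul_pow (summable_norm_besselCoeff_mul_pow hp) w).congr_deriv ?_
  simp_rw [succ_mul_besselCoeff_succ, neg_mul, tsum_neg]
  rfl

noncomputable def besselJ (p z : ℝ) : ℝ :=
  ∑' n : ℕ, besselCoeff p n * (z / 2) ^ (2 * (n : ℝ) + p)

lemma besselJ_eq_rpow_mul_besselSeries (p : ℝ) {z : ℝ} (hz : 0 < z) :
    besselJ p z = (z / 2) ^ p * besselSeries p ((z / 2) ^ 2) := by
  rw [besselJ, besselSeries, ← tsum_mul_left]
  refine tsum_congr fun n => ?_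
  rw [add_comm, rpow_add (by positivity), show 2 * (n : ℝ) = ((2 * n : ℕ) : ℝ) by push_cast; ring,
    rpow_natCast, pow_mul]
  ring

theorem hasDerivAt_besselJ {p z : ℝ} (hp : 0 ≤ p) (hz : 0 < z) :
    HasDerivAt (besselJ p) (p / z * besselJ p z - besselJ (p + 1) z) z := by
  have hz2 : 0 < z / 2 := by positivity
  have hhalf : HasDerivAt (fun y : ℝ => y / 2) (1 / 2) z := (hasDerivAt_id z).div_const 2
  have hprod := (hhalf.rpow_const (p := p) (Or.inl hz2.ne')).mul
    ((hasDerivAt_besselSeries hp _).comp z (hhalf.pow 2))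
  refine (hprod.congr_of_eventuallyEq ?_).congr_deriv ?_
  · filter_upwards [eventually_gt_nhds hz] with y hy
    exact besselJ_eq_rpow_mul_besselSeries p hy
  · rw [besselJ_eq_rpow_mul_besselSeries p hz, besselJ_eq_rpow_mul_besselSeries (p + 1) hz,
      rpow_sub_one hz2.ne', rpow_add_one hz2.ne']
    simp only [Function.comp_apply, Pi.pow_apply]
    field_simp
    ring

lemma confDeriv_comp_rpow {f : ℝ → ℝ} {f' α x : ℝ} (hx : 0 < x) (hf : HasDerivAt f f' (x ^ α)) :
    confDeriv α (f ∘ fun y => y ^ α) x = α * f' := by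
  have hpow : x ^ (1 - α) * x ^ (α - 1) = 1 := by rw [← rpow_add hx]; simp
  rw [confDeriv, (hf.comp x (hasDerivAt_rpow_const (Or.inl hx.ne'))).deriv]
  linear_combination α * f' * hpow

theorem conformable_bessel_deriv_iv_general (α : ℝ)
    (p : ℝ) (hp : 0 ≤ p) (x : ℝ) (hx : 0 < x) :
    confDeriv α (confBesselJ α p) x
      = (α * p / x ^ α) * confBesselJ α p x - α * confBesselJ α (p + 1) x := by
  have hJ : ∀ q, confBesselJ α q = besselJ q ∘ fun y => y ^ α := fun q => rfl
  simp only [hJ]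
  rw [confDeriv_comp_rpow hx (hasDerivAt_besselJ hp (rpow_pos_of_pos hx α))]
  simp only [Function.comp_apply]
  ring

theorem conformable_bessel_deriv_iv (α : ℝ) (hα : α ∈ Set.Ioc (0:ℝ) 1)
    (p : ℝ) (hp : 0 ≤ p) (x : ℝ) (hx : 0 < x) :
    confDeriv α (confBesselJ α p) x
      = (α * p / x ^ α) * confBesselJ α p x - α * confBesselJ α (p + 1) x :=
  conformable_bessel_deriv_iv_general α p hp x hx
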